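/- Let A be a k-algebra and G a finite group acting on A by algebra automorphisms, with |G| invertible in k. The map ν from the Hochschild chain complex of the crossed product A⋊G to ⊕_{g ∈ G} C_•(A; A_g), sending (a_0, σ_0) ⊗ ⋯ ⊗ (a_m, σ_m) to (σ_0⋯σ_m)^{-1}(a_0) ⊗ (σ_1⋯σ_m)^{-1}(a_1) ⊗ ⋯ ⊗ σ_m^{-1}(a_m) placed in the summand indexed by g = (σ_0⋯σ_m)^{-1}, is a chain map into the G-coinvariants of ⊕_{g ∈ G} C_•(A; A_g), where C_•(A; A_g) is the Hochschild complex with coefficients in the bimodule A twisted on the left by g. -/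

import Mathlib

/-! Write `σ` for the group component of the last entry of `x` and `g₀ = (σ_0⋯σ_m)⁻¹`.
Twisting the `j`-th entry by `(σ_j⋯σ_m)⁻¹` turns the crossed-product product `a_j·σ_j(a_{j+1})`
into the product of the twisted entries, so `ν` commutes with every face merging adjacent entries,
and all these chains lie in the summand `g₀`. The cyclic face is different: `ν` of it is the
`g₀`-twisted cyclic face of `ν(x)` transported by `σ` to the summand `σ g₀ σ⁻¹`, so the two agree
only modulo the coinvariant relations. -/

open scoped TensorProduct
open PiTensorProduct

section

variable (k : Type) [CommRing k] (A : Type) [Ring A] [Algebra k A]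
variable (G : Type) [Group G] [Fintype G] [DecidableEq G]
variable (act : G →* (A ≃ₐ[k] A))

/-- The Hochschild-type differential evaluated on an elementary `(m+1)`-tuple:
the alternating sum of the face maps (merging adjacent entries using the
multiplication `mulB`) together with the cyclic face, in which the last entry
is first twisted by `tw` and then multiplied onto the zeroth entry. -/
noncomputable def tupleD {B : Type} [AddCommGroup B] [Module k B]
    (mulB : B → B → B) (tw : B → B) {m : ℕ} (v : Fin (m + 1) → B) :
    ⨂[k]^m B :=
  (∑ i : Fin m, ((-1 : ℤ) ^ (i : ℕ)) •
      tprod k (fun j : Fin m =>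
        if (j : ℕ) < (i : ℕ) then v (Fin.castSucc j)
        else if (j : ℕ) = (i : ℕ) then mulB (v (Fin.castSucc j)) (v (Fin.succ j))
        else v (Fin.succ j)))
  + ((-1 : ℤ) ^ m) •
      tprod k (fun j : Fin m =>
        if (j : ℕ) = 0 then mulB (tw (v (Fin.last m))) (v 0)
        else v (Fin.castSucc j))

/-- Multiplication in the crossed product `A ⋊ G` on elementary elements:
`(a, g)·(b, h) = (a·g(b), gh)`. -/
def pairMul (p q : A × G) : A × G := (p.1 * act p.2 q.1, p.2 * q.2)

/-- `tailProd x j = σ_j ⋯ σ_m`, the ordered product of the group components of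
an elementary chain from position `j` on. -/
def tailProd {m : ℕ} (x : Fin m → A × G) (j : ℕ) : G :=
  ((List.ofFn fun i => (x i).2).drop j).prod

/-- The map `ν` on an elementary Hochschild chain of `A ⋊ G`:
`(a_0, σ_0) ⊗ ⋯ ⊗ (a_m, σ_m)` is sent to
`(σ_0⋯σ_m)⁻¹(a_0) ⊗ (σ_1⋯σ_m)⁻¹(a_1) ⊗ ⋯ ⊗ σ_m⁻¹(a_m)`, placed in the
summand indexed by `g = (σ_0⋯σ_m)⁻¹` of `⊕_{g ∈ G} C_•(A; A_g)`. -/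
noncomputable def nuTup {m : ℕ} (x : Fin (m + 1) → A × G) :
    G → ⨂[k]^(m + 1) A :=
  fun g => if g = (tailProd A G x 0)⁻¹
    then tprod k (fun j : Fin (m + 1) => act ((tailProd A G x (j : ℕ))⁻¹) ((x j).1))
    else 0

/-- The `G`-action on `⊕_{g ∈ G} C_•(A; A_g)`: `h` maps the summand `g` to the
summand `h g h⁻¹`, applying `h` to each tensor factor. -/
noncomputable def gact {ℓ : ℕ} (h : G) (f : G → ⨂[k]^ℓ A) : G → ⨂[k]^ℓ A :=
  fun g => PiTensorProduct.map (fun _ => (act h).toLinearMap) (f (h⁻¹ * g * h))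

/-- The submodule of `⊕_{g ∈ G} C_•(A; A_g)` by which one quotients to obtain
the `G`-coinvariants. -/
noncomputable def coinvSub (ℓ : ℕ) : Submodule k (G → ⨂[k]^ℓ A) :=
  Submodule.span k {x | ∃ (h : G) (f : G → ⨂[k]^ℓ A), x = f - gact k A G act h f}

/-- The `i`-th face of an elementary chain of `A ⋊ G`, merging the entries `i`
and `i+1` using the crossed-product multiplication. -/
def cpFace {m : ℕ} (i : Fin (m + 1)) (x : Fin (m + 2) → A × G) :
    Fin (m + 1) → A × G :=
  fun j =>
    if (j : ℕ) < (i : ℕ) then x (Fin.castSucc j)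
    else if (j : ℕ) = (i : ℕ) then
      pairMul k A G act (x (Fin.castSucc j)) (x (Fin.succ j))
    else x (Fin.succ j)

/-- The cyclic face of an elementary chain of `A ⋊ G`: the last entry is
multiplied onto the zeroth one (in the crossed product). -/
def cpCyc {m : ℕ} (x : Fin (m + 2) → A × G) : Fin (m + 1) → A × G :=
  fun j =>
    if (j : ℕ) = 0 then pairMul k A G act (x (Fin.last (m + 1))) (x 0)
    else x (Fin.castSucc j)

end

def mergeAdjacent {B : Type*} (mul : B → B → B) {m : ℕ} (i : Fin m) (v : Fin (m + 1) → B) :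
    Fin m → B :=
  fun j =>
    if (j : ℕ) < (i : ℕ) then v (Fin.castSucc j)
    else if (j : ℕ) = (i : ℕ) then mul (v (Fin.castSucc j)) (v (Fin.succ j))
    else v (Fin.succ j)

def mergeCyclic {B : Type*} (mul : B → B → B) (tw : B → B) {m : ℕ} (v : Fin (m + 1) → B) :
    Fin m → B :=
  fun j => if (j : ℕ) = 0 then mul (tw (v (Fin.last m))) (v 0) else v (Fin.castSucc j)

section Merge

variable {B : Type*} (mul : B → B → B) {m : ℕ}

lemma mergeAdjacent_of_lt {i j : Fin m} (h : j < i) (v : Fin (m + 1) → B) :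
    mergeAdjacent mul i v j = v j.castSucc := if_pos h

lemma mergeAdjacent_self (i : Fin m) (v : Fin (m + 1) → B) :
    mergeAdjacent mul i v i = mul (v i.castSucc) (v i.succ) := by
  simp [mergeAdjacent]

lemma mergeAdjacent_of_gt {i j : Fin m} (h : i < j) (v : Fin (m + 1) → B) :
    mergeAdjacent mul i v j = v j.succ := by
  have h' : (i : ℕ) < j := h
  simp [mergeAdjacent, Nat.not_lt_of_gt h', h'.ne']

lemma mergeCyclic_zero (tw : B → B) (v : Fin (m + 2) → B) :
    mergeCyclic mul tw v 0 = mul (tw (v (Fin.last (m + 1)))) (v 0) := if_pos rfl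

lemma mergeCyclic_of_ne_zero (tw : B → B) (v : Fin (m + 2) → B) {j : Fin (m + 1)} (h : j ≠ 0) :
    mergeCyclic mul tw v j = v j.castSucc := if_neg (Fin.val_ne_zero_iff.mpr h)

end Merge

lemma tupleD_eq_sum {k B : Type} [CommRing k] [AddCommGroup B] [Module k B] (mul : B → B → B)
    (tw : B → B) {m : ℕ} (v : Fin (m + 1) → B) :
    tupleD k mul tw v = ∑ i : Fin m, ((-1 : ℤ) ^ (i : ℕ)) • tprod k (mergeAdjacent mul i v)
      + ((-1 : ℤ) ^ m) • tprod k (mergeCyclic mul tw v) := rfl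

section TailProd

variable {A G : Type} [Group G] {m : ℕ}

lemma tailProd_of_le (x : Fin m → A × G) {j : ℕ} (h : m ≤ j) : tailProd A G x j = 1 := by
  rw [tailProd, List.drop_eq_nil_of_le (by simpa using h), List.prod_nil]

lemma tailProd_of_lt (x : Fin m → A × G) {j : ℕ} (h : j < m) :
    tailProd A G x j = (x ⟨j, h⟩).2 * tailProd A G x (j + 1) := by
  rw [tailProd, List.drop_eq_getElem_cons (by simpa using h), List.prod_cons, List.getElem_ofFn]
  rfl

lemma tailProd_last (x : Fin (m + 1) → A × G) : tailProd A G x m = (x (Fin.last m)).2 := by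
  rw [tailProd_of_lt x m.lt_succ_self, tailProd_of_le x le_rfl, mul_one]
  rfl

end TailProd

section CrossedProduct

variable {k : Type} [CommRing k] {A : Type} [Ring A] [Algebra k A] {G : Type} [Group G]
variable (act : G →* (A ≃ₐ[k] A)) {m : ℕ}

lemma tailProd_cpFace_of_lt (i : Fin (m + 1)) (x : Fin (m + 2) → A × G) {j : ℕ} (hij : i < j) :
    tailProd A G (cpFace k A G act i x) j = tailProd A G x (j + 1) := by
  by_cases hj : j < m + 1
  · have hentry : cpFace k A G act i x ⟨j, hj⟩ = x ⟨j + 1, by omega⟩ :=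
      mergeAdjacent_of_gt _ (Fin.lt_def.mpr hij) x
    rw [tailProd_of_lt _ hj, tailProd_cpFace_of_lt i x (j := j + 1) (by omega),
      tailProd_of_lt x (j := j + 1) (by omega), hentry]
  · rw [tailProd_of_le _ (by omega), tailProd_of_le x (by omega)]
termination_by m + 1 - j

lemma tailProd_cpFace_of_le (i : Fin (m + 1)) (x : Fin (m + 2) → A × G) {j : ℕ} (hij : j ≤ i) :
    tailProd A G (cpFace k A G act i x) j = tailProd A G x j := by
  have hj : j < m + 1 := by omega
  rw [tailProd_of_lt _ hj, tailProd_of_lt x (by omega)]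
  rcases hij.lt_or_eq with hlt | rfl
  · have hentry : cpFace k A G act i x ⟨j, hj⟩ = x ⟨j, by omega⟩ :=
      mergeAdjacent_of_lt _ (Fin.lt_def.mpr hlt) x
    rw [tailProd_cpFace_of_le i x (j := j + 1) hlt, hentry]
  · have hentry : cpFace k A G act i x i = pairMul k A G act (x i.castSucc) (x i.succ) :=
      mergeAdjacent_self _ i x
    rw [tailProd_cpFace_of_lt act i x (lt_add_one _), tailProd_of_lt x (j := i + 1) (by omega),
      ← mul_assoc]
    exact congrArg (·.2 * _) hentry
termination_by (i : ℕ) - j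

lemma tailProd_cpCyc_of_pos (x : Fin (m + 2) → A × G) {j : ℕ} (h0 : 0 < j) (hj : j ≤ m + 1) :
    tailProd A G (cpCyc k A G act x) j = tailProd A G x j * (x (Fin.last (m + 1))).2⁻¹ := by
  rcases hj.lt_or_eq with hlt | rfl
  · have hentry : cpCyc k A G act x ⟨j, hlt⟩ = x ⟨j, by omega⟩ :=
      mergeCyclic_of_ne_zero (pairMul k A G act) id x fun h => h0.ne' (congrArg Fin.val h)
    rw [tailProd_of_lt _ hlt, tailProd_cpCyc_of_pos x (j := j + 1) (by omega) hlt,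
      tailProd_of_lt x (j := j) (by omega), hentry, mul_assoc]
  · rw [tailProd_of_le _ le_rfl, tailProd_last, mul_inv_cancel]
termination_by m + 1 - j

lemma tailProd_cpCyc_zero (x : Fin (m + 2) → A × G) :
    tailProd A G (cpCyc k A G act x) 0
      = (x (Fin.last (m + 1))).2 * tailProd A G x 0 * (x (Fin.last (m + 1))).2⁻¹ := by
  have hentry : cpCyc k A G act x 0 = pairMul k A G act (x (Fin.last (m + 1))) (x 0) :=
    mergeCyclic_zero (pairMul k A G act) id x
  rw [tailProd_of_lt _ m.succ_pos, zero_add, tailProd_cpCyc_of_pos act x one_pos (by omega),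
    tailProd_of_lt x (j := 0) (by omega), ← mul_assoc, ← mul_assoc]
  exact congrArg (· * _ * _) (congrArg Prod.snd hentry)

def nuEntries {m : ℕ} (x : Fin m → A × G) : Fin m → A :=
  fun j => act (tailProd A G x j)⁻¹ (x j).1

lemma nuEntries_cpFace (i : Fin (m + 1)) (x : Fin (m + 2) → A × G) :
    nuEntries act (cpFace k A G act i x) = mergeAdjacent (· * ·) i (nuEntries act x) := by
  funext j
  rcases lt_trichotomy j i with h | rfl | h
  · rw [mergeAdjacent_of_lt _ h, nuEntries, nuEntries,
      tailProd_cpFace_of_le act i x (Fin.le_def.mp h.le),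
      show cpFace k A G act i x j = x j.castSucc from mergeAdjacent_of_lt _ h x]
    rfl
  · have hentry : cpFace k A G act j x j = pairMul k A G act (x j.castSucc) (x j.succ) :=
      mergeAdjacent_self _ j x
    rw [mergeAdjacent_self, nuEntries, tailProd_cpFace_of_le act j x le_rfl, hentry, pairMul]
    have hT : tailProd A G x j = (x j.castSucc).2 * tailProd A G x (j + 1) :=
      tailProd_of_lt x (by omega)
    simp only [nuEntries, Fin.val_castSucc, Fin.val_succ]
    rw [map_mul (act _), ← AlgEquiv.mul_apply, ← map_mul act, hT, mul_inv_rev, inv_mul_cancel_right]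
  · rw [mergeAdjacent_of_gt _ h, nuEntries, nuEntries, tailProd_cpFace_of_lt act i x (j := j) h,
      show cpFace k A G act i x j = x j.succ from mergeAdjacent_of_gt _ h x]
    rfl

lemma nuEntries_cpCyc (x : Fin (m + 2) → A × G) :
    nuEntries act (cpCyc k A G act x) = act (x (Fin.last (m + 1))).2 ∘
      mergeCyclic (· * ·) (act (tailProd A G x 0)⁻¹) (nuEntries act x) := by
  funext j
  rw [Function.comp_apply]
  by_cases hj : j = 0
  · subst hj
    have hentry : cpCyc k A G act x 0 = pairMul k A G act (x (Fin.last (m + 1))) (x 0) :=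
      mergeCyclic_zero (pairMul k A G act) id x
    rw [mergeCyclic_zero, nuEntries, Fin.val_zero, tailProd_cpCyc_zero, hentry, pairMul]
    simp [nuEntries, tailProd_last, mul_inv_rev, AlgEquiv.mul_apply]
  · have hentry : cpCyc k A G act x j = x j.castSucc := mergeCyclic_of_ne_zero _ id x hj
    rw [mergeCyclic_of_ne_zero _ _ _ hj, nuEntries, nuEntries,
      tailProd_cpCyc_of_pos act x (Fin.pos_iff_ne_zero.mpr hj) j.isLt.le, hentry, mul_inv_rev, inv_inv,
      map_mul, AlgEquiv.mul_apply]
    rfl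

lemma mk_gact {ℓ : ℕ} (h : G) (f : G → ⨂[k]^ℓ A) :
    Submodule.Quotient.mk (p := coinvSub k A G act ℓ) (gact k A G act h f)
      = Submodule.Quotient.mk f :=
  (Submodule.Quotient.eq _).mpr (sub_mem_comm_iff.mp (Submodule.subset_span ⟨h, f, rfl⟩))

variable [DecidableEq G]

lemma gact_single {ℓ : ℕ} (h g : G) (v : ⨂[k]^ℓ A) :
    gact k A G act h (Pi.single g v)
      = Pi.single (h * g * h⁻¹) (PiTensorProduct.map (fun _ => (act h).toLinearMap) v) := by
  funext g'
  have hconj : h⁻¹ * g' * h = g ↔ g' = h * g * h⁻¹ := by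
    constructor <;> rintro rfl <;> group
  simp only [gact, Pi.single_apply, hconj]
  split_ifs <;> simp

lemma nuTup_eq_single (x : Fin (m + 1) → A × G) :
    nuTup k A G act x = Pi.single (tailProd A G x 0)⁻¹ (tprod k (nuEntries act x)) := by
  funext g
  rw [Pi.single_apply]
  rfl

lemma nuTup_cpFace (i : Fin (m + 1)) (x : Fin (m + 2) → A × G) :
    nuTup k A G act (cpFace k A G act i x)
      = Pi.single (tailProd A G x 0)⁻¹ (tprod k (mergeAdjacent (· * ·) i (nuEntries act x))) := by
  rw [nuTup_eq_single, nuEntries_cpFace, tailProd_cpFace_of_le act i x (Nat.zero_le _)]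

lemma nuTup_cpCyc (x : Fin (m + 2) → A × G) :
    nuTup k A G act (cpCyc k A G act x)
      = gact k A G act (x (Fin.last (m + 1))).2 (Pi.single (tailProd A G x 0)⁻¹
          (tprod k (mergeCyclic (· * ·) (act (tailProd A G x 0)⁻¹) (nuEntries act x)))) := by
  rw [nuTup_eq_single, gact_single, map_tprod, nuEntries_cpCyc, tailProd_cpCyc_zero]
  congr 1
  group

end CrossedProduct

section

variable (k : Type) [CommRing k] (A : Type) [Ring A] [Algebra k A]
variable (G : Type) [Group G] [Fintype G] [DecidableEq G]
variable (act : G →* (A ≃ₐ[k] A))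

theorem nu_chain_map (m : ℕ) (x : Fin (m + 2) → A × G) :
    Submodule.Quotient.mk (p := coinvSub k A G act (m + 1))
      ((∑ i : Fin (m + 1), ((-1 : ℤ) ^ (i : ℕ)) •
          nuTup k A G act (cpFace k A G act i x))
        + ((-1 : ℤ) ^ (m + 1)) • nuTup k A G act (cpCyc k A G act x))
    = Submodule.Quotient.mk (p := coinvSub k A G act (m + 1))
      (fun g => if g = (tailProd A G x 0)⁻¹
        then tupleD k (· * ·) (act g)
          (fun j : Fin (m + 2) => act ((tailProd A G x (j : ℕ))⁻¹) ((x j).1))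
        else 0) := by
  change _ = Submodule.Quotient.mk (fun g => if g = (tailProd A G x 0)⁻¹
    then tupleD k (· * ·) (act g) (nuEntries act x) else 0)
  simp only [nuTup_cpFace, nuTup_cpCyc]
  rw [Submodule.Quotient.mk_add, Submodule.Quotient.mk_smul, mk_gact, ← Submodule.Quotient.mk_smul,
    ← Submodule.Quotient.mk_add]
  congr 1
  funext g
  by_cases hg : g = (tailProd A G x 0)⁻¹ <;> simp [hg, tupleD_eq_sum, Finset.sum_apply]

end
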